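/- arXiv:1808.05809 — 2 statements merged into one kernel-verified Lean document; each statement's English description precedes it below -/
import Mathlib

section
/- (Dual tightness implies (f+ε)-approximation.) Let G = (V, E) be a finite hypergraph of rank f ≥ 1 with nonnegative vertex weights w, let ε ∈ (0,1), and set β = ε/(f+ε). Let δ be a feasible edge packing, i.e. δ(e) ≥ 0 for all e ∈ E and ∑_{e ∋ v} δ(e) ≤ w(v) for all v ∈ V, and let T = { v ∈ V : ∑_{e ∋ v} δ(e) ≥ (1−β)·w(v) } be the set of β-tight vertices. Then for every feasible fractional cover x (x ≥ 0 and ∑_{v ∈ e} x(v) ≥ 1 for all e ∈ E), we have w(T) ≤ (f+ε) · ∑_{v ∈ V} w(v)·x(v). -/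
/-!
Writing `load v = ∑_{e ∋ v} δ(e)`, a `β`-tight vertex has `(1 - β) w(v) ≤ load v`, so
`(1 - β) w(T) ≤ ∑_v load v = ∑_e |e| δ(e) ≤ f ∑_e δ(e)`. Weak LP duality bounds the packing
value `∑_e δ(e)` by the cover value `∑_v w(v) x(v)`, and `1 / (1 - β) = (f + ε) / f` turns
the factor `f` into `f + ε`.
-/

open Finset

namespace Hypergraph

variable {V : Type*} [DecidableEq V]

def load (E : Finset (Finset V)) (δ : Finset V → ℝ) (v : V) : ℝ :=
  ∑ e ∈ E.filter (fun e => v ∈ e), δ e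

lemma load_nonneg {E : Finset (Finset V)} {δ : Finset V → ℝ} (hδ : ∀ e ∈ E, 0 ≤ δ e)
    (v : V) : 0 ≤ load E δ v :=
  sum_nonneg fun e he => hδ e (mem_filter.mp he).1

lemma sum_mul_load [Fintype V] (E : Finset (Finset V)) (δ : Finset V → ℝ) (g : V → ℝ) :
    ∑ v, g v * load E δ v = ∑ e ∈ E, δ e * ∑ v ∈ e, g v := by
  simp only [load, mul_sum]
  rw [sum_comm' (t' := E) (s' := fun e => e) (by simp [and_comm])]
  exact sum_congr rfl fun e _ => sum_congr rfl fun v _ => mul_comm _ _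

lemma sum_load [Fintype V] (E : Finset (Finset V)) (δ : Finset V → ℝ) :
    ∑ v, load E δ v = ∑ e ∈ E, δ e * e.card := by
  simpa using sum_mul_load E δ 1

lemma sum_load_le_rank_mul [Fintype V] {E : Finset (Finset V)} {δ : Finset V → ℝ} {f : ℕ}
    (hδ : ∀ e ∈ E, 0 ≤ δ e) (hrank : ∀ e ∈ E, e.card ≤ f) :
    ∑ v, load E δ v ≤ f * ∑ e ∈ E, δ e := by
  rw [sum_load, mul_sum]
  refine sum_le_sum fun e he => ?_
  rw [mul_comm (f : ℝ)]
  exact mul_le_mul_of_nonneg_left (Nat.cast_le.mpr (hrank e he)) (hδ e he)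

theorem sum_packing_le_sum_cover [Fintype V] {E : Finset (Finset V)} {δ : Finset V → ℝ}
    {w x : V → ℝ}
    (hδ : ∀ e ∈ E, 0 ≤ δ e) (hpack : ∀ v, load E δ v ≤ w v)
    (hx : ∀ v, 0 ≤ x v) (hcover : ∀ e ∈ E, 1 ≤ ∑ v ∈ e, x v) :
    ∑ e ∈ E, δ e ≤ ∑ v, w v * x v :=
  calc ∑ e ∈ E, δ e
      ≤ ∑ e ∈ E, δ e * ∑ v ∈ e, x v :=
        sum_le_sum fun e he => le_mul_of_one_le_right (hδ e he) (hcover e he)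
    _ = ∑ v, x v * load E δ v := (sum_mul_load E δ x).symm
    _ ≤ ∑ v, w v * x v :=
        sum_le_sum fun v _ => by
          rw [mul_comm (w v)]
          exact mul_le_mul_of_nonneg_left (hpack v) (hx v)

end Hypergraph

open Hypergraph in
theorem tight_vertices_approx_general
    {V : Type*} [Fintype V] [DecidableEq V]
    (E : Finset (Finset V))
    (f : ℕ) (hf : 1 ≤ f) (hrank : ∀ e ∈ E, e.card ≤ f)
    (w : V → ℝ)
    (ε : ℝ) (hε0 : 0 < ε)
    (β : ℝ) (hβ : β = ε / ((f : ℝ) + ε))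
    (δ : Finset V → ℝ) (hδ_nonneg : ∀ e ∈ E, 0 ≤ δ e)
    (hδ_pack : ∀ v : V, ∑ e ∈ E.filter (fun e => v ∈ e), δ e ≤ w v)
    (T : Finset V)
    (hT : T = Finset.univ.filter
      (fun v => (1 - β) * w v ≤ ∑ e ∈ E.filter (fun e => v ∈ e), δ e))
    (x : V → ℝ) (hx_nonneg : ∀ v, 0 ≤ x v)
    (hx_cover : ∀ e ∈ E, 1 ≤ ∑ v ∈ e, x v) :
    ∑ v ∈ T, w v ≤ ((f : ℝ) + ε) * ∑ v : V, w v * x v := by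
  have hf₀ : (0 : ℝ) < f := by exact_mod_cast hf
  have hfε : (0 : ℝ) < f + ε := by positivity
  have h1β : 1 - β = f / (f + ε) := by
    rw [hβ]
    field_simp
    ring
  have key : f / (f + ε) * ∑ v ∈ T, w v ≤ f * ∑ v, w v * x v :=
    calc f / (f + ε) * ∑ v ∈ T, w v
        ≤ ∑ v ∈ T, load E δ v := by
          rw [← h1β, mul_sum]
          exact sum_le_sum fun v hv => by
            rw [hT] at hv
            exact (mem_filter.mp hv).2
      _ ≤ ∑ v, load E δ v :=
          sum_le_sum_of_subset_of_nonneg (subset_univ T) fun v _ _ => load_nonneg hδ_nonneg v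
      _ ≤ f * ∑ e ∈ E, δ e := sum_load_le_rank_mul hδ_nonneg hrank
      _ ≤ f * ∑ v, w v * x v := by
          gcongr
          exact sum_packing_le_sum_cover hδ_nonneg hδ_pack hx_nonneg hx_cover
  rwa [div_mul_eq_mul_div, div_le_iff₀ hfε, mul_assoc, mul_le_mul_iff_right₀ hf₀,
    mul_comm] at key

/-- Dual tightness implies an `(f+ε)`-approximation: in a hypergraph of rank
`f ≥ 1`, with `β = ε/(f+ε)`, for every feasible edge packing `δ` the weight of
the set of `β`-tight vertices is at most `(f+ε)` times the value of any
feasible fractional cover `x`. -/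
theorem tight_vertices_approx
    {V : Type*} [Fintype V] [DecidableEq V]
    (E : Finset (Finset V)) (hE : ∀ e ∈ E, e.Nonempty)
    (f : ℕ) (hf : 1 ≤ f) (hrank : ∀ e ∈ E, e.card ≤ f)
    (w : V → ℝ) (hw : ∀ v, 0 ≤ w v)
    (ε : ℝ) (hε0 : 0 < ε) (hε1 : ε < 1)
    (β : ℝ) (hβ : β = ε / ((f : ℝ) + ε))
    (δ : Finset V → ℝ) (hδ_nonneg : ∀ e ∈ E, 0 ≤ δ e)
    (hδ_pack : ∀ v : V, ∑ e ∈ E.filter (fun e => v ∈ e), δ e ≤ w v)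
    (T : Finset V)
    (hT : T = Finset.univ.filter
      (fun v => (1 - β) * w v ≤ ∑ e ∈ E.filter (fun e => v ∈ e), δ e))
    (x : V → ℝ) (hx_nonneg : ∀ v, 0 ≤ x v)
    (hx_cover : ∀ e ∈ E, 1 ≤ ∑ v ∈ e, x v) :
    ∑ v ∈ T, w v ≤ ((f : ℝ) + ε) * ∑ v : V, w v * x v :=
  tight_vertices_approx_general E f hf hrank w ε hε0 β hβ δ hδ_nonneg hδ_pack T hT x hx_nonneg
    hx_cover
end

section
/- (Quantitative form of Theorem C.1, refined running time.) For every constant γ ∈ (0,1) there exist C > 0 and Δ₀ ≥ 3 such that for every real Δ ≥ Δ₀, every integer f ≥ 1 and every real ε ∈ (0,1], setting β = ε/(f+ε) and α = (log Δ / log log Δ)^{1−γ} if f/β < (log Δ / log log Δ)^{γ}, and α = 2 otherwise, one has log Δ / log α + f·(α/β) ≤ C · ( log Δ / log log Δ + (f²/ε)^{1/γ} · log log Δ ). -/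
open Real

set_option maxHeartbeats 1000000 in
/-- Quantitative form of Theorem C.1 (refined running time): for every constant
`γ ∈ (0,1)` there are `C > 0` and `Δ₀ ≥ 3` such that for all `Δ ≥ Δ₀`, integers
`f ≥ 1` and `ε ∈ (0,1]`, with `β = ε/(f+ε)` and the raise factor
`α = (log Δ / log log Δ)^(1−γ)` if `f/β < (log Δ / log log Δ)^γ` and `α = 2`
otherwise, the iteration bound `log_α Δ + f·α/β` is at most
`C · (log Δ / log log Δ + (f²/ε)^(1/γ) · log log Δ)`. -/
theorem round_complexity_refined_alpha :
    ∀ γ : ℝ, 0 < γ → γ < 1 →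
    ∃ C : ℝ, 0 < C ∧ ∃ Δ₀ : ℝ, 3 ≤ Δ₀ ∧
      ∀ Δ : ℝ, Δ₀ ≤ Δ →
      ∀ f : ℕ, 1 ≤ f →
      ∀ ε : ℝ, 0 < ε → ε ≤ 1 →
        let β : ℝ := ε / ((f : ℝ) + ε)
        let α : ℝ :=
          if (f : ℝ) / β < (Real.log Δ / Real.log (Real.log Δ)) ^ γ then
            (Real.log Δ / Real.log (Real.log Δ)) ^ (1 - γ)
          else 2
        Real.log Δ / Real.log α + (f : ℝ) * (α / β)
          ≤ C * (Real.log Δ / Real.log (Real.log Δ)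
              + ((f : ℝ) ^ 2 / ε) ^ (1 / γ) * Real.log (Real.log Δ)) := by
  intro γ hγ0 hγ1
  have h1γ : (0:ℝ) < 1 - γ := by linarith
  have hlog2 : (0:ℝ) < Real.log 2 := Real.log_pos (by norm_num)
  have hc2 : (0:ℝ) < (2:ℝ) ^ (1/γ) / Real.log 2 := by positivity
  refine ⟨2/(1-γ) + 1 + (2:ℝ)^(1/γ)/Real.log 2 + 4, by positivity,
    Real.exp (Real.exp 2), ?_, ?_⟩
  · have h1 : (3:ℝ) ≤ Real.exp 2 := by nlinarith [Real.add_one_le_exp (2:ℝ)]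
    have h2 : Real.exp 2 ≤ Real.exp (Real.exp 2) := Real.exp_le_exp.mpr (by linarith)
    linarith
  intro Δ hΔ f hf ε hε0 hε1
  intro β α
  unfold α β
  clear_value α β
  clear α β
  have hf1 : (1:ℝ) ≤ (f:ℝ) := by exact_mod_cast hf
  have hfε : (0:ℝ) < (f:ℝ) + ε := by linarith
  have hΔ0 : (0:ℝ) < Δ := lt_of_lt_of_le (Real.exp_pos _) hΔ
  set E : ℝ := ε / ((f:ℝ) + ε) with hEdef
  have hβ : (0:ℝ) < E := by rw [hEdef]; positivity
  set D := Real.log Δ with hDdef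
  set T := Real.log D with hTdef
  have hD : Real.exp 2 ≤ D := by
    have := Real.log_le_log (Real.exp_pos _) hΔ
    rwa [Real.log_exp] at this
  have hD0 : (0:ℝ) < D := lt_of_lt_of_le (Real.exp_pos _) hD
  have hT : (2:ℝ) ≤ T := by
    have := Real.log_le_log (Real.exp_pos _) hD
    rwa [Real.log_exp] at this
  have hT0 : (0:ℝ) < T := by linarith
  have hL : (0:ℝ) < D / T := by positivity
  have hS : (0:ℝ) ≤ ((f:ℝ)^2/ε) ^ (1/γ) * T := by positivity
  have hfβ : (f:ℝ)/E = (f:ℝ)*((f:ℝ)+ε)/ε := by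
    rw [hEdef]; field_simp
  have hlogTle : Real.log T ≤ T / 2 := by
    have h2 : Real.log T = Real.log 2 + Real.log (T/2) := by
      rw [← Real.log_mul (by norm_num) (by positivity)]
      congr 1; ring
    have h3 : Real.log (T/2) ≤ T/2 - 1 := Real.log_le_sub_one_of_pos (by positivity)
    have h4 : Real.log 2 ≤ 1 := by
      nlinarith [Real.log_le_sub_one_of_pos (show (0:ℝ) < 2 by norm_num)]
    linarith
  have hlogL : T/2 ≤ Real.log (D/T) := by
    rw [Real.log_div (ne_of_gt hD0) (ne_of_gt hT0), ← hTdef]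
    linarith
  have hx1 : (1:ℝ) ≤ (f:ℝ)^2/ε := by
    rw [le_div_iff₀ hε0]; nlinarith
  split_ifs with hcase
  · -- case α = (D/T)^(1-γ)
    have hlogα : Real.log ((D/T)^(1-γ)) = (1-γ) * Real.log (D/T) :=
      Real.log_rpow hL _
    have hterm1 : D / Real.log ((D/T)^(1-γ)) ≤ (2/(1-γ)) * (D/T) := by
      rw [hlogα]
      have h5 : D / ((1-γ) * Real.log (D/T)) ≤ D / ((1-γ) * (T/2)) := by
        gcongr <;> nlinarith
      calc D / ((1-γ) * Real.log (D/T)) ≤ D / ((1-γ) * (T/2)) := h5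
        _ = (2/(1-γ)) * (D/T) := by field_simp
    have hterm2 : (f:ℝ) * ((D/T)^(1-γ) / E) ≤ D/T := by
      have he : (f:ℝ) * ((D/T)^(1-γ) / E) = ((f:ℝ)/E) * (D/T)^(1-γ) := by ring
      rw [he]
      have h6 : ((f:ℝ)/E) * (D/T)^(1-γ) ≤ (D/T)^γ * (D/T)^(1-γ) :=
        mul_le_mul_of_nonneg_right hcase.le (Real.rpow_nonneg hL.le _)
      have h7 : (D/T)^γ * (D/T)^(1-γ) = D/T := by
        rw [← Real.rpow_add hL]; norm_num
      linarith
    have hfinal : (2/(1-γ)) * (D/T) + D/T ≤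
        (2/(1-γ) + 1 + (2:ℝ)^(1/γ)/Real.log 2 + 4) *
          (D/T + ((f:ℝ)^2/ε) ^ (1/γ) * T) := by
      have p1 : (0:ℝ) ≤ ((2:ℝ)^(1/γ)/Real.log 2 + 4) * (D/T) :=
        mul_nonneg (by positivity) hL.le
      have p2 : (0:ℝ) ≤ (2/(1-γ) + 1 + (2:ℝ)^(1/γ)/Real.log 2 + 4) *
          (((f:ℝ)^2/ε) ^ (1/γ) * T) := mul_nonneg (by positivity) hS
      have expand : (2/(1-γ) + 1 + (2:ℝ)^(1/γ)/Real.log 2 + 4) *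
          (D/T + ((f:ℝ)^2/ε) ^ (1/γ) * T)
          = (2/(1-γ) + 1) * (D/T) + ((2:ℝ)^(1/γ)/Real.log 2 + 4) * (D/T)
            + (2/(1-γ) + 1 + (2:ℝ)^(1/γ)/Real.log 2 + 4) *
              (((f:ℝ)^2/ε) ^ (1/γ) * T) := by ring
      linarith
    linarith
  · -- case α = 2
    push_neg at hcase
    have hfβ2 : (f:ℝ)*((f:ℝ)+ε)/ε ≤ 2*(f:ℝ)^2/ε := by
      gcongr ?_ / ε
      nlinarith
    have hge : (D/T)^γ ≤ 2*(f:ℝ)^2/ε := by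
      rw [hfβ] at hcase
      linarith
    have h1 : ((D/T)^γ)^(1/γ) = D/T := by
      rw [← Real.rpow_mul hL.le, mul_one_div_cancel hγ0.ne', Real.rpow_one]
    have h2 : ((D/T)^γ)^(1/γ) ≤ (2*(f:ℝ)^2/ε)^(1/γ) :=
      Real.rpow_le_rpow (Real.rpow_nonneg hL.le _) hge (by positivity)
    have h3 : (2*(f:ℝ)^2/ε)^(1/γ) = (2:ℝ)^(1/γ)*((f:ℝ)^2/ε)^(1/γ) := by
      rw [mul_div_assoc, Real.mul_rpow (by norm_num) (by positivity)]
    have hLbound : D/T ≤ (2:ℝ)^(1/γ) * ((f:ℝ)^2/ε)^(1/γ) := by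
      rw [← h1, ← h3]; exact h2
    have hDle : D ≤ (2:ℝ)^(1/γ) * ((f:ℝ)^2/ε)^(1/γ) * T := by
      have := mul_le_mul_of_nonneg_right hLbound hT0.le
      rwa [div_mul_cancel₀ D hT0.ne'] at this
    have hterm1 : D / Real.log 2 ≤
        ((2:ℝ)^(1/γ)/Real.log 2) * (((f:ℝ)^2/ε)^(1/γ) * T) := by
      have h8 : D / Real.log 2 ≤ ((2:ℝ)^(1/γ) * ((f:ℝ)^2/ε)^(1/γ) * T) / Real.log 2 := by
        gcongr
      calc D / Real.log 2 ≤ ((2:ℝ)^(1/γ) * ((f:ℝ)^2/ε)^(1/γ) * T) / Real.log 2 := h8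
        _ = ((2:ℝ)^(1/γ)/Real.log 2) * (((f:ℝ)^2/ε)^(1/γ) * T) := by ring
    have hpow : (f:ℝ)^2/ε ≤ ((f:ℝ)^2/ε)^(1/γ) := by
      have h4 : (1:ℝ) ≤ 1/γ := by rw [le_div_iff₀ hγ0]; linarith
      have := Real.rpow_le_rpow_of_exponent_le hx1 h4
      rwa [Real.rpow_one] at this
    have hterm2 : (f:ℝ) * (2/E) ≤ 2 * (((f:ℝ)^2/ε)^(1/γ) * T) := by
      have he : (f:ℝ) * (2/E) = 2 * ((f:ℝ)/E) := by ring
      rw [he, hfβ]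
      have h5 : 2*((f:ℝ)*((f:ℝ)+ε)/ε) ≤ 4*((f:ℝ)^2/ε) := by
        calc 2*((f:ℝ)*((f:ℝ)+ε)/ε) ≤ 2*(2*(f:ℝ)^2/ε) := by linarith
          _ = 4*((f:ℝ)^2/ε) := by ring
      have h6 : 4*((f:ℝ)^2/ε) ≤ 4*((f:ℝ)^2/ε)^(1/γ) := by linarith
      have h7 : 4*((f:ℝ)^2/ε)^(1/γ) ≤ 2 * (((f:ℝ)^2/ε)^(1/γ) * T) := by
        have hX : (0:ℝ) ≤ ((f:ℝ)^2/ε)^(1/γ) := Real.rpow_nonneg (by positivity) _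
        nlinarith
      linarith
    have hfinal : ((2:ℝ)^(1/γ)/Real.log 2) * (((f:ℝ)^2/ε)^(1/γ) * T)
        + 2 * (((f:ℝ)^2/ε)^(1/γ) * T) ≤
        (2/(1-γ) + 1 + (2:ℝ)^(1/γ)/Real.log 2 + 4) *
          (D/T + ((f:ℝ)^2/ε) ^ (1/γ) * T) := by
      have p1 : (0:ℝ) ≤ (2/(1-γ) + 3) * (((f:ℝ)^2/ε) ^ (1/γ) * T) :=
        mul_nonneg (by positivity) hS
      have p2 : (0:ℝ) ≤ (2/(1-γ) + 1 + (2:ℝ)^(1/γ)/Real.log 2 + 4) * (D/T) :=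
        mul_nonneg (by positivity) hL.le
      have expand : (2/(1-γ) + 1 + (2:ℝ)^(1/γ)/Real.log 2 + 4) *
          (D/T + ((f:ℝ)^2/ε) ^ (1/γ) * T)
          = ((2:ℝ)^(1/γ)/Real.log 2) * (((f:ℝ)^2/ε) ^ (1/γ) * T)
            + 2 * (((f:ℝ)^2/ε) ^ (1/γ) * T)
            + (2/(1-γ) + 3) * (((f:ℝ)^2/ε) ^ (1/γ) * T)
            + (2/(1-γ) + 1 + (2:ℝ)^(1/γ)/Real.log 2 + 4) * (D/T) := by ring
      linarith
    linarith
end
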